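/- arXiv:0804.0624 — 3 statements merged into one kernel-verified Lean document; each statement's English description precedes it below -/
import Mathlib

section
/- In the free group F₂ on α, β, for every nonnegative integer r, the number of elements of word length exactly 2r+1 that are of the form w·αᵏ·w⁻¹ for some w ∈ F₂ and some integer k is 2·3^r. -/
abbrev F2 := FreeGroup (Fin 2)

def α : F2 := FreeGroup.of 0

def β : F2 := FreeGroup.of 1

/-- `C(γ, n)`: elements of word length exactly `n` of the form `w·γᵏ·w⁻¹`. -/
def C (γ : F2) (n : ℕ) : Set F2 :=
  {g : F2 | FreeGroup.norm g = n ∧ ∃ (w : F2) (k : ℤ), g = w * γ ^ k * w⁻¹}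

/-!
A conjugate `w α^k w⁻¹` with `k ≠ 0` can be rewritten as `u⁻¹ α^k u` where the reduced word `V`
of `u` does not begin with `α^{±1}`, by absorbing the leading `α`-letters of `w⁻¹` into `α^k`.
Then `invRev V ++ α^k ++ V` is already reduced, so the length is `2|V| + |k|`, and comparing
suffixes shows that `V` and `k` are determined by the element. Elements of length `2r + 1` thus
correspond to a sign together with a reduced word of length at most `r` beginning with
`β^{±1}`; counting such words by their first letter (two choices, then three at each step)
gives `3^r` of them.
-/

open List

namespace FreeGroup

variable {ι : Type*}

theorem mk_mem_zpowers_of {i : ι} :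
    ∀ {L : List (ι × Bool)}, (∀ x ∈ L, x.1 = i) → mk L ∈ Subgroup.zpowers (of i)
  | [], _ => by rw [← one_eq_mk]; exact one_mem _
  | ⟨_, b⟩ :: L, h => by
    obtain rfl : _ = i := h _ mem_cons_self
    rw [← singleton_append, ← mul_mk]
    refine mul_mem ?_ (mk_mem_zpowers_of fun x hx => h x (mem_cons_of_mem _ hx))
    cases b
    · exact inv_mem (Subgroup.mem_zpowers _)
    · exact Subgroup.mem_zpowers _

theorem exists_zpow_eq_mk_replicate (i : ι) {k : ℤ} (hk : k ≠ 0) :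
    ∃ b j, j ≠ 0 ∧ of i ^ k = mk (replicate j (i, b)) := by
  obtain ⟨n, rfl | rfl⟩ := Int.eq_nat_or_neg k
  · refine ⟨true, n, by omega, ?_⟩
    rw [zpow_natCast, of, pow_mk, flatten_replicate_singleton]
  · refine ⟨false, n, by omega, ?_⟩
    rw [zpow_neg, zpow_natCast, of, pow_mk, flatten_replicate_singleton, inv_mk]
    simp [invRev]

theorem exists_eq_zpow_mul [DecidableEq ι] (i : ι) (v : FreeGroup ι) :
    ∃ (k : ℤ) (u : FreeGroup ι), v = of i ^ k * u ∧ ∀ x ∈ u.toWord.head?, x.1 ≠ i := by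
  let p : ι × Bool → Bool := fun x => x.1 = i
  obtain ⟨k, hk⟩ := Subgroup.mem_zpowers_iff.1 <|
    mk_mem_zpowers_of (L := v.toWord.takeWhile p) fun x hx => by
      simpa [p] using mem_takeWhile_imp hx
  refine ⟨k, mk (v.toWord.dropWhile p), ?_, fun x hx => ?_⟩
  · rw [hk, mul_mk, takeWhile_append_dropWhile, mk_toWord]
  · rw [toWord_mk, (isReduced_toWord.infix (dropWhile_suffix p).isInfix).reduce_eq] at hx
    have := head?_dropWhile_not p v.toWord
    rw [Option.mem_def.1 hx] at this
    simpa [p] using this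

theorem isReduced_invRev [DecidableEq ι] {L : List (ι × Bool)} :
    IsReduced (invRev L) ↔ IsReduced L := by
  simp only [isReduced_iff_reduce_eq, reduce_invRev, invRev_injective.eq_iff]

theorem IsReduced.replicate_append {L : List (ι × Bool)} {a : ι × Bool} (hL : IsReduced L)
    (ha : ∀ x ∈ L.head?, x.1 ≠ a.1) (j : ℕ) : IsReduced (replicate j a ++ L) := by
  refine isChain_append.2 ⟨isChain_replicate_of_rel j fun _ => rfl, hL, fun x hx y hy h => ?_⟩
  rw [eq_of_mem_replicate (mem_of_getLast? hx)] at h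
  exact absurd h.symm (ha y hy)

def conjWord (V : List (ι × Bool)) (a : ι × Bool) (j : ℕ) : List (ι × Bool) :=
  invRev V ++ replicate j a ++ V

theorem length_conjWord (V : List (ι × Bool)) (a : ι × Bool) (j : ℕ) :
    (conjWord V a j).length = 2 * V.length + j := by
  simp [conjWord]; ring

theorem mk_conjWord (V : List (ι × Bool)) (a : ι × Bool) (j : ℕ) :
    mk (conjWord V a j) = (mk V)⁻¹ * mk (replicate j a) * mk V := by
  rw [conjWord, inv_mk, mul_mk, mul_mk]

theorem isReduced_conjWord [DecidableEq ι] {V : List (ι × Bool)} {a : ι × Bool} {j : ℕ}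
    (hV : IsReduced V) (ha : ∀ x ∈ V.head?, x.1 ≠ a.1) (hj : j ≠ 0) :
    IsReduced (conjWord V a j) := by
  have hleft : IsReduced (invRev V ++ replicate j a) := by
    have := isReduced_invRev.2 (hV.replicate_append (a := (a.1, !a.2)) ha j)
    simpa [invRev_append, invRev] using this
  exact hleft.append_overlap (hV.replicate_append ha j) (by simpa using hj)

theorem toWord_mk_conjWord [DecidableEq ι] {V : List (ι × Bool)} {a : ι × Bool} {j : ℕ}
    (hV : IsReduced V) (ha : ∀ x ∈ V.head?, x.1 ≠ a.1) (hj : j ≠ 0) :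
    (mk (conjWord V a j)).toWord = conjWord V a j := by
  rw [toWord_mk, (isReduced_conjWord hV ha hj).reduce_eq]

theorem conjWord_inj {V V' : List (ι × Bool)} {i : ι} {b b' : Bool} {j j' : ℕ}
    (hV : ∀ x ∈ V.head?, x.1 ≠ i) (hV' : ∀ x ∈ V'.head?, x.1 ≠ i)
    (h : conjWord V (i, b) j = conjWord V' (i, b') j') :
    V = V' ∧ replicate j (i, b) = replicate j' (i, b') := by
  wlog hle : V.length ≤ V'.length generalizing V V' b b' j j'
  · obtain ⟨h₁, h₂⟩ := this hV' hV h.symm (by omega)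
    exact ⟨h₁.symm, h₂.symm⟩
  have hsuffix : V <:+ conjWord V' (i, b') j' := h ▸ suffix_append _ _
  obtain ⟨X, rfl⟩ : V <:+ V' := suffix_of_suffix_length_le hsuffix (suffix_append _ _) hle
  have hmid : replicate j (i, b) = invRev X ++ replicate j' (i, b') ++ X :=
    append_cancel_right (by simpa [conjWord, invRev_append] using h)
  obtain rfl : X = [] := by
    by_contra hX
    obtain ⟨x, X, rfl⟩ := exists_cons_of_ne_nil hX
    have hx : x ∈ replicate j (i, b) := by rw [hmid]; simp
    exact hV' x (by simp) (congrArg Prod.fst (eq_of_mem_replicate hx))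
  simpa using hmid

section Counting

variable [Fintype ι] [DecidableEq ι]

def reducedWordsLE : ℕ → Finset (ι × Bool) → Finset (List (ι × Bool))
  | 0, _ => {[]}
  | ℓ + 1, A => insert [] <| A.biUnion fun y =>
      (reducedWordsLE ℓ (Finset.univ.erase (y.1, !y.2))).image (y :: ·)

theorem mem_reducedWordsLE {ℓ : ℕ} {A : Finset (ι × Bool)} {V : List (ι × Bool)} :
    V ∈ reducedWordsLE ℓ A ↔ V.length ≤ ℓ ∧ IsReduced V ∧ ∀ x ∈ V.head?, x ∈ A := by
  induction ℓ generalizing A V with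
  | zero =>
    simp only [reducedWordsLE, Finset.mem_singleton, Nat.le_zero, length_eq_zero_iff]
    exact ⟨by rintro rfl; simp [IsReduced.nil], And.left⟩
  | succ ℓ ih =>
    cases V with
    | nil => simp [reducedWordsLE, IsReduced.nil]
    | cons y W =>
      have hfollow : ∀ z : ι × Bool, (y.1 = z.1 → y.2 = z.2) ↔ z ≠ (y.1, !y.2) := by
        rintro ⟨z₁, z₂⟩
        simp only [ne_eq, Prod.mk.injEq]
        cases y.2 <;> cases z₂ <;> simp [eq_comm]
      simp only [reducedWordsLE, Finset.mem_insert, Finset.mem_biUnion, Finset.mem_image,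
        cons.injEq, ih, IsReduced, isChain_cons, hfollow, Finset.mem_erase, Finset.mem_univ,
        length_cons, head?_cons, Option.mem_def, Option.some.injEq]
      grind

theorem card_reducedWordsLE_succ (ℓ : ℕ) (A : Finset (ι × Bool)) :
    (reducedWordsLE (ℓ + 1) A).card =
      1 + ∑ y ∈ A, (reducedWordsLE ℓ (Finset.univ.erase (y.1, !y.2))).card := by
  rw [reducedWordsLE, Finset.card_insert_of_notMem (by simp), Finset.card_biUnion, add_comm]
  · simp only [Finset.card_image_of_injective _ cons_injective]
  · intro y _ z _ hyz
    simp only [Function.onFun, Finset.disjoint_left, Finset.mem_image]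
    rintro _ ⟨_, _, rfl⟩ ⟨_, _, h⟩
    exact hyz (cons.inj h).1.symm

end Counting

end FreeGroup

namespace F2

open FreeGroup List

-- The closed form `1 + |A| (3^ℓ - 1) / 2`, stated without subtraction and division.
theorem two_mul_card_reducedWordsLE_add (ℓ : ℕ) (A : Finset (Fin 2 × Bool)) :
    2 * (reducedWordsLE ℓ A).card + A.card = 2 + A.card * 3 ^ ℓ := by
  induction ℓ generalizing A with
  | zero => simp [reducedWordsLE]
  | succ ℓ ih =>
    have hstep : ∀ y : Fin 2 × Bool,
        2 * (reducedWordsLE ℓ (Finset.univ.erase (y.1, !y.2))).card + 3 =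
          2 + 3 ^ (ℓ + 1) := by
      intro y
      have hcard : (Finset.univ.erase (y.1, !y.2)).card = 3 := by
        rw [Finset.card_erase_of_mem (Finset.mem_univ _)]; rfl
      have := ih (Finset.univ.erase (y.1, !y.2))
      rw [hcard] at this
      rw [pow_succ]; linarith
    have hsum := Finset.sum_congr rfl fun y (_ : y ∈ A) => hstep y
    rw [Finset.sum_add_distrib, ← Finset.mul_sum] at hsum
    simp only [Finset.sum_const, smul_eq_mul] at hsum
    rw [card_reducedWordsLE_succ]
    linarith

def betaLetters : Finset (Fin 2 × Bool) := Finset.univ.filter (·.1 ≠ 0)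

def normalForms (r : ℕ) : Finset (Bool × List (Fin 2 × Bool)) :=
  Finset.univ ×ˢ reducedWordsLE r betaLetters

def ofNormalForm (r : ℕ) : Bool × List (Fin 2 × Bool) → F2
  | (b, V) => mk (conjWord V (0, b) (2 * r + 1 - 2 * V.length))

theorem mem_normalForms {r : ℕ} {b : Bool} {V : List (Fin 2 × Bool)} :
    (b, V) ∈ normalForms r ↔ V.length ≤ r ∧ IsReduced V ∧ ∀ x ∈ V.head?, x.1 ≠ 0 := by
  simp [normalForms, mem_reducedWordsLE, betaLetters]

theorem toWord_ofNormalForm {r : ℕ} {b : Bool} {V : List (Fin 2 × Bool)}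
    (h : (b, V) ∈ normalForms r) :
    (ofNormalForm r (b, V)).toWord = conjWord V (0, b) (2 * r + 1 - 2 * V.length) := by
  obtain ⟨hlen, hV, hhead⟩ := mem_normalForms.1 h
  exact toWord_mk_conjWord hV hhead (by omega)

theorem ofNormalForm_mem_C {r : ℕ} {p : Bool × List (Fin 2 × Bool)} (h : p ∈ normalForms r) :
    ofNormalForm r p ∈ C α (2 * r + 1) := by
  obtain ⟨b, V⟩ := p
  have hlen := (mem_normalForms.1 h).1
  refine ⟨?_, ?_⟩
  · rw [FreeGroup.norm, toWord_ofNormalForm h, length_conjWord]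
    omega
  · obtain ⟨k, hk⟩ : ∃ k : ℤ, α ^ k = mk (replicate (2 * r + 1 - 2 * V.length) (0, b)) :=
      Subgroup.mem_zpowers_iff.1 <| mk_mem_zpowers_of fun x hx => by rw [eq_of_mem_replicate hx]
    exact ⟨(mk V)⁻¹, k, by rw [ofNormalForm, mk_conjWord, inv_inv, hk]⟩

theorem exists_normalForm_of_mem_C {r : ℕ} {g : F2} (hg : g ∈ C α (2 * r + 1)) :
    ∃ p ∈ normalForms r, ofNormalForm r p = g := by
  obtain ⟨hnorm, w, k, rfl⟩ := hg
  obtain ⟨m, v, hv, hhead⟩ := exists_eq_zpow_mul 0 w⁻¹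
  have hconj : w * α ^ k * w⁻¹ = v⁻¹ * α ^ k * v := by
    rw [← inv_inv w, hv, α]; group
  have hk : k ≠ 0 := by
    rintro rfl
    simp at hnorm
  obtain ⟨b, j, hj, hαk⟩ := exists_zpow_eq_mk_replicate (0 : Fin 2) hk
  have hg : w * α ^ k * w⁻¹ = mk (conjWord v.toWord (0, b) j) := by
    rw [hconj, mk_conjWord, mk_toWord, α, hαk]
  rw [hg, FreeGroup.norm, toWord_mk_conjWord isReduced_toWord hhead hj, length_conjWord] at hnorm
  refine ⟨(b, v.toWord), mem_normalForms.2 ⟨by omega, isReduced_toWord, hhead⟩, ?_⟩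
  rw [hg, ofNormalForm]
  congr
  omega

theorem C_alpha_odd_eq_image (r : ℕ) :
    C α (2 * r + 1) = (normalForms r).image (ofNormalForm r) := by
  ext g
  simp only [Finset.coe_image, Set.mem_image, Finset.mem_coe]
  exact ⟨exists_normalForm_of_mem_C, fun ⟨_, hp, hg⟩ => hg ▸ ofNormalForm_mem_C hp⟩

theorem ofNormalForm_injOn (r : ℕ) : Set.InjOn (ofNormalForm r) (normalForms r) := by
  rintro ⟨b, V⟩ hp ⟨b', V'⟩ hp' h
  have hw := congrArg toWord h
  rw [toWord_ofNormalForm hp, toWord_ofNormalForm hp'] at hw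
  obtain ⟨rfl, hrep⟩ := conjWord_inj (mem_normalForms.1 hp).2.2 (mem_normalForms.1 hp').2.2 hw
  have hlen := (mem_normalForms.1 hp).1
  obtain ⟨n, hn⟩ : ∃ n, 2 * r + 1 - 2 * V.length = n + 1 := ⟨2 * r - 2 * V.length, by omega⟩
  have hb : b = b' := by simpa [hn, replicate_succ] using congrArg head? hrep
  rw [hb]

theorem card_normalForms (r : ℕ) : (normalForms r).card = 2 * 3 ^ r := by
  have h := two_mul_card_reducedWordsLE_add r betaLetters
  have hβ : betaLetters.card = 2 := rfl
  rw [hβ] at h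
  rw [normalForms, Finset.card_product, Finset.card_univ, Fintype.card_bool]
  omega

end F2

/-- The number of elements of word length exactly `2r+1` that are conjugates of a
power of `α` is `2·3^r`. -/
theorem card_C_alpha_odd (r : ℕ) : Nat.card (C α (2 * r + 1)) = 2 * 3 ^ r := by
  rw [F2.C_alpha_odd_eq_image, Nat.card_coe_set_eq, Set.ncard_coe_finset,
    Finset.card_image_of_injOn (F2.ofNormalForm_injOn r), F2.card_normalForms]
end

section
/- In the free group F₂ on α, β, for every nonnegative integer r, the number of elements of word length exactly 2r+2 that are conjugates of powers of α is 2·3^r. -/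
open Finset

namespace FreeGroup

variable {ι : Type*}

theorem ne_mk_not_iff {x y : ι × Bool} : y ≠ (x.1, !x.2) ↔ (x.1 = y.1 → x.2 = y.2) := by
  obtain ⟨a, b⟩ := x
  obtain ⟨c, d⟩ := y
  cases b <;> cases d <;> simp [eq_comm]

theorem IsReduced.append {L₁ L₂ : List (ι × Bool)} (h₁ : IsReduced L₁) (h₂ : IsReduced L₂)
    (h : ∀ a ∈ L₁.getLast?, ∀ b ∈ L₂.head?, a.1 ≠ b.1) : IsReduced (L₁ ++ L₂) :=
  List.isChain_append.2 ⟨h₁, h₂, fun a ha b hb hab => absurd hab (h a ha b hb)⟩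

theorem IsReduced.invRev {L : List (ι × Bool)} (h : IsReduced L) : IsReduced (invRev L) := by
  rw [FreeGroup.invRev, IsReduced, List.isChain_reverse, List.isChain_map]
  exact h.imp fun a b hab hba => by simp [hab hba.symm]

variable [DecidableEq ι]

theorem IsReduced.toWord_mk {L : List (ι × Bool)} (h : IsReduced L) : (mk L).toWord = L := by
  rw [FreeGroup.toWord_mk, h.reduce_eq]

theorem toWord_of_zpow (i : ι) (k : ℤ) :
    (of i ^ k).toWord = List.replicate k.natAbs (i, decide (0 ≤ k)) := by
  cases k with
  | ofNat n => simp [toWord_of_pow]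
  | negSucc n =>
    rw [zpow_negSucc, toWord_inv, toWord_of_pow]
    simp [FreeGroup.invRev, List.reverse_replicate]

theorem toWord_inv_mul_of_zpow_mul {i : ι} {w : FreeGroup ι}
    (hw : ∀ a ∈ w.toWord.head?, a.1 ≠ i) {k : ℤ} (hk : k ≠ 0) :
    (w⁻¹ * of i ^ k * w).toWord = invRev w.toWord ++ (of i ^ k).toWord ++ w.toWord := by
  have hR : (of i ^ k).toWord ≠ [] := by simpa [toWord_of_zpow] using hk
  have hRi : ∀ a ∈ (of i ^ k).toWord, a.1 = i := by
    simp +contextual [toWord_of_zpow, List.mem_replicate]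
  have hred : IsReduced (invRev w.toWord ++ (of i ^ k).toWord ++ w.toWord) := by
    refine (isReduced_toWord.invRev.append isReduced_toWord ?_).append isReduced_toWord ?_
    · intro a ha b hb
      simp only [FreeGroup.invRev, List.getLast?_reverse, List.head?_map] at ha
      obtain ⟨c, hc, rfl⟩ := Option.mem_map.1 ha
      rw [hRi b (List.mem_of_mem_head? hb)]
      exact hw c hc
    · intro a ha b hb
      rw [List.getLast?_append_of_ne_nil _ hR] at ha
      rw [hRi a (List.mem_of_mem_getLast? ha)]
      exact (hw b hb).symm
  rw [← hred.reduce_eq, ← toWord_mk, ← mul_mk, ← mul_mk, ← toWord_inv, mk_toWord, mk_toWord,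
    mk_toWord]

theorem norm_inv_mul_of_zpow_mul {i : ι} {w : FreeGroup ι}
    (hw : ∀ a ∈ w.toWord.head?, a.1 ≠ i) {k : ℤ} (hk : k ≠ 0) :
    (w⁻¹ * of i ^ k * w).norm = 2 * w.norm + k.natAbs := by
  simp only [norm, toWord_inv_mul_of_zpow_mul hw hk, List.length_append, invRev_length,
    toWord_of_zpow, List.length_replicate]
  ring

theorem exists_of_zpow_mul_eq (i : ι) (w : FreeGroup ι) :
    ∃ j : ℤ, ∃ v : FreeGroup ι, of i ^ j * v = w ∧ ∀ a ∈ v.toWord.head?, a.1 ≠ i := by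
  suffices ∀ L : List (ι × Bool), IsReduced L →
      ∃ j : ℤ, ∃ v : FreeGroup ι, of i ^ j * v = mk L ∧ ∀ a ∈ v.toWord.head?, a.1 ≠ i by
    simpa only [mk_toWord] using this w.toWord isReduced_toWord
  intro L hL
  induction L with
  | nil => exact ⟨0, 1, by simp [← one_eq_mk], by simp⟩
  | cons a L ih =>
    obtain ⟨j, v, hv, hvi⟩ := ih (hL.infix (List.suffix_cons a L).isInfix)
    by_cases ha : a.1 = i
    · obtain ⟨_, b⟩ := a
      subst ha
      -- `mk [(i, b)]` is `of i` or `(of i)⁻¹`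
      refine ⟨(if b then 1 else -1) + j, v, ?_, hvi⟩
      rw [zpow_add, mul_assoc, hv, ← List.singleton_append, ← mul_mk]
      cases b <;> rfl
    · refine ⟨0, mk (a :: L), by simp, ?_⟩
      simpa [hL.toWord_mk] using ha

theorem lift_inv_mul_of_zpow_mul (i : ι) (w : FreeGroup ι) (k : ℤ) :
    lift (Pi.mulSingle i (Multiplicative.ofAdd (1 : ℤ))) (w⁻¹ * of i ^ k * w) =
      Multiplicative.ofAdd k := by
  simp [mul_comm _ (lift _ w), ← ofAdd_zsmul]

theorem inv_mul_of_zpow_mul_inj {i : ι} {v w : FreeGroup ι}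
    (hv : ∀ a ∈ v.toWord.head?, a.1 ≠ i) (hw : ∀ a ∈ w.toWord.head?, a.1 ≠ i) {k l : ℤ}
    (hk : k ≠ 0) (hl : l ≠ 0)
    (h : v⁻¹ * of i ^ k * v = w⁻¹ * of i ^ l * w) : v = w ∧ k = l := by
  have hkl : k = l := by
    simpa [lift_inv_mul_of_zpow_mul] using
      congrArg (lift (Pi.mulSingle i (Multiplicative.ofAdd (1 : ℤ)))) h
  subst hkl
  have hnorm : v.norm = w.norm := by
    have := congrArg norm h
    rw [norm_inv_mul_of_zpow_mul hv hk, norm_inv_mul_of_zpow_mul hw hl] at this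
    omega
  have hword := congrArg toWord h
  rw [toWord_inv_mul_of_zpow_mul hv hk, toWord_inv_mul_of_zpow_mul hw hl] at hword
  exact ⟨toWord_injective (List.append_inj' hword hnorm).2, rfl⟩

variable [Fintype ι]

def reducedWordsStartingWith (x : ι × Bool) : ℕ → Finset (List (ι × Bool))
  | 0 => {[x]}
  | n + 1 =>
    (univ.erase (x.1, !x.2)).biUnion fun y => (reducedWordsStartingWith y n).image (x :: ·)

theorem mem_reducedWordsStartingWith {x : ι × Bool} {n : ℕ} {L : List (ι × Bool)} :
    L ∈ reducedWordsStartingWith x n ↔ IsReduced L ∧ L.length = n + 1 ∧ L.head? = some x := by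
  induction n generalizing x L with
  | zero =>
    rw [reducedWordsStartingWith, mem_singleton, zero_add, List.length_eq_one_iff]
    constructor
    · rintro rfl
      simp
    · rintro ⟨-, ⟨a, rfl⟩, h⟩
      simpa using h
  | succ n ih =>
    simp only [reducedWordsStartingWith, mem_biUnion, mem_erase, mem_univ, and_true, mem_image,
      ne_mk_not_iff, ih]
    constructor
    · rintro ⟨y, hxy, M, ⟨hM, hlen, hy⟩, rfl⟩
      obtain ⟨M, rfl⟩ : ∃ M', M = y :: M' := ⟨M.tail, List.eq_cons_of_mem_head? hy⟩
      exact ⟨isReduced_cons_cons.2 ⟨hxy, hM⟩, by simpa using hlen, rfl⟩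
    · rintro ⟨hL, hlen, hx⟩
      obtain ⟨M, rfl⟩ : ∃ M', L = x :: M' := ⟨L.tail, List.eq_cons_of_mem_head? hx⟩
      obtain ⟨y, M, rfl⟩ : ∃ y M', M = y :: M' :=
        List.exists_cons_of_length_eq_add_one (by simpa using hlen)
      obtain ⟨hxy, hM⟩ := isReduced_cons_cons.1 hL
      exact ⟨y, hxy, y :: M, ⟨hM, by simpa using hlen, rfl⟩, rfl⟩

theorem card_reducedWordsStartingWith (x : ι × Bool) (n : ℕ) :
    #(reducedWordsStartingWith x n) = (2 * Fintype.card ι - 1) ^ n := by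
  induction n generalizing x with
  | zero => simp [reducedWordsStartingWith]
  | succ n ih =>
    rw [reducedWordsStartingWith, card_biUnion]
    · simp_rw [card_image_of_injective _ List.cons_injective, ih, sum_const,
        card_erase_of_mem (mem_univ _), card_univ, Fintype.card_prod, Fintype.card_bool,
        smul_eq_mul, mul_comm _ 2, pow_succ']
    · intro y _ z _ hyz
      refine disjoint_left.2 fun L hy hz => hyz ?_
      simp only [mem_image] at hy hz
      obtain ⟨M, hM, rfl⟩ := hy
      obtain ⟨N, hN, hMN⟩ := hz
      rw [List.cons_injective hMN] at hN
      simpa [(mem_reducedWordsStartingWith.1 hM).2.2] using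
        (mem_reducedWordsStartingWith.1 hN).2.2

def reducedWordsNotStartingWith (i : ι) : ℕ → Finset (List (ι × Bool))
  | 0 => {[]}
  | n + 1 => (univ.filter fun x : ι × Bool => x.1 ≠ i).biUnion (reducedWordsStartingWith · n)

theorem mem_reducedWordsNotStartingWith {i : ι} {n : ℕ} {L : List (ι × Bool)} :
    L ∈ reducedWordsNotStartingWith i n ↔
      IsReduced L ∧ L.length = n ∧ ∀ a ∈ L.head?, a.1 ≠ i := by
  cases n with
  | zero =>
    simp only [reducedWordsNotStartingWith, mem_singleton, List.length_eq_zero_iff]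
    constructor
    · rintro rfl
      simp
    · exact fun h => h.2.1
  | succ n =>
    simp only [reducedWordsNotStartingWith, mem_biUnion, mem_filter, mem_univ, true_and,
      mem_reducedWordsStartingWith]
    constructor
    · rintro ⟨x, hx, hL, hlen, hhead⟩
      simp_all
    · rintro ⟨hL, hlen, hhead⟩
      obtain ⟨x, M, rfl⟩ := List.exists_cons_of_length_eq_add_one hlen
      exact ⟨x, by simpa using hhead, hL, hlen, rfl⟩

theorem card_reducedWordsNotStartingWith_succ (i : ι) (n : ℕ) :
    #(reducedWordsNotStartingWith i (n + 1)) =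
      2 * (Fintype.card ι - 1) * (2 * Fintype.card ι - 1) ^ n := by
  rw [reducedWordsNotStartingWith, card_biUnion]
  · have : (univ.filter fun x : ι × Bool => x.1 ≠ i) = univ.erase i ×ˢ univ := by ext; simp
    simp [card_reducedWordsStartingWith, this, card_erase_of_mem, mul_comm]
  · intro x _ y _ hxy
    refine disjoint_left.2 fun L hx hy => hxy ?_
    simpa [(mem_reducedWordsStartingWith.1 hx).2.2] using
      (mem_reducedWordsStartingWith.1 hy).2.2

theorem sum_card_reducedWordsNotStartingWith (i : ι) (r : ℕ) :
    ∑ n ∈ range (r + 1), #(reducedWordsNotStartingWith i n) = (2 * Fintype.card ι - 1) ^ r := by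
  have hk : 2 * Fintype.card ι - 1 = 2 * (Fintype.card ι - 1) + 1 := by
    have := Fintype.card_pos_iff.2 ⟨i⟩
    omega
  induction r with
  | zero => simp [reducedWordsNotStartingWith]
  | succ r ih =>
    rw [sum_range_succ, ih, card_reducedWordsNotStartingWith_succ, hk]
    ring

def conjNormalForms (i : ι) (r : ℕ) : Finset (List (ι × Bool) × ℤ) :=
  (range (r + 1)).biUnion fun n =>
    reducedWordsNotStartingWith i n ×ˢ {2 * ((r : ℤ) + 1 - n), -(2 * ((r : ℤ) + 1 - n))}

theorem mem_conjNormalForms {i : ι} {r : ℕ} {L : List (ι × Bool)} {k : ℤ} :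
    (L, k) ∈ conjNormalForms i r ↔
      IsReduced L ∧ (∀ a ∈ L.head?, a.1 ≠ i) ∧ k ≠ 0 ∧ 2 * L.length + k.natAbs = 2 * r + 2 := by
  simp only [conjNormalForms, mem_biUnion, mem_range, mem_product, mem_insert, mem_singleton,
    mem_reducedWordsNotStartingWith]
  constructor
  · rintro ⟨n, hn, ⟨hL, rfl, hhead⟩, hk⟩
    exact ⟨hL, hhead, by omega⟩
  · rintro ⟨hL, hhead, hk, hlen⟩
    exact ⟨L.length, by omega, ⟨hL, rfl, hhead⟩, by omega⟩

theorem card_conjNormalForms (i : ι) (r : ℕ) :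
    #(conjNormalForms i r) = 2 * (2 * Fintype.card ι - 1) ^ r := by
  rw [conjNormalForms, card_biUnion, ← sum_card_reducedWordsNotStartingWith i r, mul_sum]
  · refine sum_congr rfl fun n hn => ?_
    rw [card_product, card_pair (by grind), mul_comm]
  · intro m _ n _ hmn
    refine disjoint_left.2 fun ⟨L, k⟩ hm hn => hmn ?_
    rw [mem_product, mem_reducedWordsNotStartingWith] at hm hn
    rw [← hm.1.2.1, hn.1.2.1]

def conjOfNormalForm (i : ι) (p : List (ι × Bool) × ℤ) : FreeGroup ι :=
  (mk p.1)⁻¹ * of i ^ p.2 * mk p.1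

theorem image_conjOfNormalForm (i : ι) (r : ℕ) :
    conjOfNormalForm i '' conjNormalForms i r =
      {g | g.norm = 2 * r + 2 ∧ ∃ (w : FreeGroup ι) (k : ℤ), g = w * of i ^ k * w⁻¹} := by
  ext g
  simp only [conjOfNormalForm, Set.mem_ofPred_eq, Set.mem_image, mem_coe, Prod.exists,
    mem_conjNormalForms]
  constructor
  · rintro ⟨L, k, ⟨hL, hhead, hk, hlen⟩, rfl⟩
    rw [← hL.toWord_mk] at hhead
    refine ⟨?_, (mk L)⁻¹, k, by rw [inv_inv]⟩
    rw [norm_inv_mul_of_zpow_mul hhead hk, norm, hL.toWord_mk, hlen]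
  · rintro ⟨hg, w, k, rfl⟩
    obtain ⟨j, v, hv, hvi⟩ := exists_of_zpow_mul_eq i w⁻¹
    have hconj : w * of i ^ k * w⁻¹ = v⁻¹ * of i ^ k * v := by
      rw [← inv_inv w, ← hv]
      group
    have hk : k ≠ 0 := by
      rintro rfl
      simp at hg
    rw [hconj, norm_inv_mul_of_zpow_mul hvi hk] at hg
    exact ⟨v.toWord, k, ⟨isReduced_toWord, hvi, hk, hg⟩, by rw [mk_toWord, hconj]⟩

theorem injOn_conjOfNormalForm (i : ι) (r : ℕ) :
    Set.InjOn (conjOfNormalForm i) (conjNormalForms i r) := by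
  rintro ⟨L, k⟩ hLk ⟨M, l⟩ hMl h
  obtain ⟨hL, hLi, hk, -⟩ := mem_conjNormalForms.1 hLk
  obtain ⟨hM, hMi, hl, -⟩ := mem_conjNormalForms.1 hMl
  rw [← hL.toWord_mk] at hLi
  rw [← hM.toWord_mk] at hMi
  obtain ⟨hLM, rfl⟩ := inv_mul_of_zpow_mul_inj hLi hMi hk hl h
  rw [← hL.toWord_mk, hLM, hM.toWord_mk]

theorem ncard_conj_of_zpow_norm_eq (i : ι) (r : ℕ) :
    {g | g.norm = 2 * r + 2 ∧ ∃ (w : FreeGroup ι) (k : ℤ), g = w * of i ^ k * w⁻¹}.ncard =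
      2 * (2 * Fintype.card ι - 1) ^ r := by
  rw [← image_conjOfNormalForm, (injOn_conjOfNormalForm i r).ncard_image, Set.ncard_coe_finset,
    card_conjNormalForms]

end FreeGroup

/-- The number of elements of word length exactly `2r+2` that are conjugates of a
power of `α` is `2·3^r`. -/
theorem card_C_alpha_even (r : ℕ) : Nat.card (C α (2 * r + 2)) = 2 * 3 ^ r := by
  rw [Nat.card_coe_set_eq, C, α, FreeGroup.ncard_conj_of_zpow_norm_eq]
  simp
end

section
/- In the free group F₂ on α, β, for every nonnegative integer r, the number of elements of word length exactly 2r+2 of the form w·(αβ)ᵏ·w⁻¹ (for some w ∈ F₂ and integer k) is 4·3^r. -/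
/-!
Every nontrivial conjugate of a power of `αβ` has a unique reduced spelling `u · pᵏ · u⁻¹`,
where `p` is one of the four cyclic words `αβ, βα, β⁻¹α⁻¹, α⁻¹β⁻¹`, `k ≥ 1`, and nothing cancels
at the two junctions; its length is `2|u| + 2k`. Existence follows by conjugating one letter at
a time; uniqueness by peeling equal letters off both ends until a cyclically reduced core
remains. For length `2r + 2` and a fixed `p`, it remains to choose a reduced `u` with `|u| ≤ r`
whose last letter avoids two values: `1 + ∑_{m<r} 2·3^m = 3^r` choices, so `4·3^r` in all.
-/

namespace FreeGroup

variable {ι : Type*}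

instance [DecidableEq ι] : DecidablePred (IsReduced : List (ι × Bool) → Prop) :=
  fun L => inferInstanceAs (Decidable (L.IsChain _))

def invLetter (x : ι × Bool) : ι × Bool := (x.1, !x.2)

@[simp] theorem invLetter_invLetter (x : ι × Bool) : invLetter (invLetter x) = x := by
  simp [invLetter]

theorem invRev_cons_eq_append (x : ι × Bool) (L : List (ι × Bool)) :
    invRev (x :: L) = invRev L ++ [invLetter x] := by
  simp [invRev, invLetter]

theorem isReduced_cons_cons_iff_ne {x y : ι × Bool} {L : List (ι × Bool)} :
    IsReduced (x :: y :: L) ↔ y ≠ invLetter x ∧ IsReduced (y :: L) := by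
  rw [isReduced_cons_cons, invLetter]
  obtain ⟨_, _ | _⟩ := x <;> obtain ⟨_, _ | _⟩ := y <;> simp [eq_comm]

theorem isReduced_invRev_iff {L : List (ι × Bool)} : IsReduced (invRev L) ↔ IsReduced L := by
  simp only [IsReduced, invRev, List.isChain_reverse, List.isChain_map]
  exact List.IsChain.iff fun a b => by grind

theorem eq_invLetter_comm {x y : ι × Bool} : x = invLetter y ↔ y = invLetter x := by
  obtain ⟨_, _ | _⟩ := x <;> obtain ⟨_, _ | _⟩ := y <;> simp [invLetter, eq_comm]

theorem mk_cons_eq_mul (x : ι × Bool) (L : List (ι × Bool)) : mk (x :: L) = mk [x] * mk L := rfl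

theorem mk_invLetter (x : ι × Bool) : mk [invLetter x] = (mk [x])⁻¹ := by
  rw [inv_mk, invRev_cons_eq_append, invRev_empty, List.nil_append]

theorem isReduced_invRev_append_iff {u L : List (ι × Bool)} :
    IsReduced (invRev u ++ L) ↔ IsReduced (invRev L ++ u) := by
  rw [← isReduced_invRev_iff, invRev_append, invRev_invRev]

theorem isReduced_append_append_invRev_iff {u L : List (ι × Bool)} (hL : L ≠ []) :
    IsReduced (u ++ L ++ invRev u) ↔ IsReduced (u ++ L) ∧ IsReduced (u ++ invRev L) := by
  have hinv : invRev (u ++ invRev L) = L ++ invRev u := by simp [invRev_append, invRev_invRev]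
  refine ⟨fun h => ⟨h.infix ⟨[], invRev u, by simp⟩, ?_⟩, fun ⟨h₁, h₂⟩ => ?_⟩
  · have h' := isReduced_invRev_iff.mpr h
    simp only [invRev_append, invRev_invRev, List.append_assoc] at h'
    exact h'.infix ⟨[], invRev u, by simp⟩
  · exact h₁.append_overlap (hinv ▸ isReduced_invRev_iff.mpr h₂) hL

theorem not_isCyclicallyReduced_append_append_invRev {u c : List (ι × Bool)} (hu : u ≠ []) :
    ¬ IsCyclicallyReduced (u ++ c ++ invRev u) := by
  obtain ⟨y, v, rfl⟩ := List.exists_cons_of_ne_nil hu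
  intro h
  have hlast : (y :: v ++ c ++ invRev (y :: v)).getLast? = some (invLetter y) := by
    rw [invRev_cons_eq_append, ← List.append_assoc, List.getLast?_concat]
  simpa [invLetter] using h.2 _ hlast y rfl

theorem eq_of_append_append_invRev_eq {u u' c c' : List (ι × Bool)}
    (hc : IsCyclicallyReduced c) (hc' : IsCyclicallyReduced c')
    (h : u ++ c ++ invRev u = u' ++ c' ++ invRev u') : u = u' ∧ c = c' := by
  induction u generalizing u' with
  | nil =>
    rcases u' with _ | ⟨y, v'⟩
    · simpa using h
    · simp only [List.nil_append, invRev_empty, List.append_nil] at h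
      exact absurd (h ▸ hc) (not_isCyclicallyReduced_append_append_invRev (by simp))
  | cons x v ih =>
    rcases u' with _ | ⟨y, v'⟩
    · simp only [List.nil_append, invRev_empty, List.append_nil] at h
      exact absurd (h ▸ hc') (not_isCyclicallyReduced_append_append_invRev (by simp))
    · simp only [invRev_cons_eq_append, List.cons_append, List.cons.injEq] at h
      obtain ⟨rfl, h⟩ := h
      simp only [← List.append_assoc] at h
      exact (ih (List.append_cancel_right h)).imp_left (congrArg _)

section Counting

variable [Fintype ι] [DecidableEq ι]

def reducedTails : ℕ → ι × Bool → Finset (List (ι × Bool))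
  | 0, _ => {[]}
  | n + 1, x => (Finset.univ.erase (invLetter x)).biUnion fun y => (reducedTails n y).image (y :: ·)

theorem mem_reducedTails {n : ℕ} {x : ι × Bool} {v : List (ι × Bool)} :
    v ∈ reducedTails n x ↔ IsReduced (x :: v) ∧ v.length = n := by
  induction n generalizing x v with
  | zero => simp +contextual [reducedTails, List.length_eq_zero_iff]
  | succ n ih =>
    rcases v with _ | ⟨y, t⟩
    · simp [reducedTails]
    · simp only [reducedTails, Finset.mem_biUnion, Finset.mem_erase, Finset.mem_univ,
        Finset.mem_image, ih, List.cons.injEq, isReduced_cons_cons_iff_ne, List.length_cons]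
      grind

theorem card_biUnion_image_cons {γ : Type*} [DecidableEq γ] (s : Finset γ)
    (t : γ → Finset (List γ)) :
    (s.biUnion fun y => (t y).image (y :: ·)).card = ∑ y ∈ s, (t y).card := by
  rw [Finset.card_biUnion]
  · exact Finset.sum_congr rfl fun y _ => Finset.card_image_of_injective _ List.cons_injective
  · intro y _ y' _ hne
    simp only [Function.onFun, Finset.disjoint_left, Finset.mem_image]
    rintro _ ⟨t, -, rfl⟩ ⟨t', -, h⟩
    exact hne (List.cons.inj h).1.symm

theorem card_reducedTails (n : ℕ) (x : ι × Bool) :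
    (reducedTails n x).card = (2 * Fintype.card ι - 1) ^ n := by
  induction n generalizing x with
  | zero => simp [reducedTails]
  | succ n ih =>
    rw [reducedTails, card_biUnion_image_cons, Finset.sum_congr rfl fun y _ => ih y,
      Finset.sum_const, Finset.card_erase_of_mem (Finset.mem_univ _), Finset.card_univ,
      Fintype.card_prod, Fintype.card_bool, smul_eq_mul, pow_succ', mul_comm _ 2]

def commonReducedTails (r : ℕ) (x z : ι × Bool) : Finset (List (ι × Bool)) :=
  ((Finset.range (r + 1)).biUnion fun m => reducedTails m x).filter fun v => IsReduced (z :: v)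

theorem mem_commonReducedTails {r : ℕ} {x z : ι × Bool} {v : List (ι × Bool)} :
    v ∈ commonReducedTails r x z ↔ v.length ≤ r ∧ IsReduced (x :: v) ∧ IsReduced (z :: v) := by
  simp only [commonReducedTails, Finset.mem_filter, Finset.mem_biUnion, Finset.mem_range,
    mem_reducedTails]
  grind

theorem filter_reducedTails_succ (x z : ι × Bool) (m : ℕ) :
    (reducedTails (m + 1) x).filter (fun v => IsReduced (z :: v)) =
      ((Finset.univ.erase (invLetter x)).erase (invLetter z)).biUnion
        fun y => (reducedTails m y).image (y :: ·) := by
  ext v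
  rcases v with _ | ⟨y, t⟩
  · simp [mem_reducedTails]
  · simp only [Finset.mem_filter, Finset.mem_biUnion, Finset.mem_erase, Finset.mem_univ,
      Finset.mem_image, mem_reducedTails, List.cons.injEq, isReduced_cons_cons_iff_ne,
      List.length_cons]
    grind

theorem card_filter_reducedTails_succ {x z : ι × Bool} (hxz : x ≠ z) (m : ℕ) :
    ((reducedTails (m + 1) x).filter fun v => IsReduced (z :: v)).card =
      (2 * Fintype.card ι - 2) * (2 * Fintype.card ι - 1) ^ m := by
  have hne : invLetter z ≠ invLetter x := fun h => hxz (by simpa using congrArg invLetter h.symm)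
  rw [filter_reducedTails_succ, card_biUnion_image_cons,
    Finset.sum_congr rfl fun y _ => card_reducedTails m y, Finset.sum_const,
    Finset.card_erase_of_mem (Finset.mem_erase.2 ⟨hne, Finset.mem_univ _⟩),
    Finset.card_erase_of_mem (Finset.mem_univ _), Finset.card_univ,
    Fintype.card_prod, Fintype.card_bool, smul_eq_mul, mul_comm _ 2, Nat.sub_sub]

theorem card_commonReducedTails {x z : ι × Bool} (hxz : x ≠ z) (r : ℕ) :
    (commonReducedTails r x z).card = (2 * Fintype.card ι - 1) ^ r := by
  induction r with
  | zero => simp [commonReducedTails, reducedTails, Finset.filter_singleton]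
  | succ r ih =>
    have hsplit : commonReducedTails (r + 1) x z =
        (reducedTails (r + 1) x).filter (fun v => IsReduced (z :: v)) ∪
          commonReducedTails r x z := by
      rw [commonReducedTails, Finset.range_add_one, Finset.biUnion_insert, Finset.filter_union]
      rfl
    have hdisj : Disjoint ((reducedTails (r + 1) x).filter fun v => IsReduced (z :: v))
        (commonReducedTails r x z) := by
      refine Finset.disjoint_left.2 fun v hv hv' => ?_
      have h₁ := (mem_reducedTails.1 (Finset.mem_filter.1 hv).1).2
      have h₂ := (mem_commonReducedTails.1 hv').1
      omega
    obtain ⟨e, he⟩ := Nat.exists_eq_add_one_of_ne_zero (Fintype.card_pos_iff.2 ⟨x.1⟩).ne'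
    rw [hsplit, Finset.card_union_of_disjoint hdisj, card_filter_reducedTails_succ hxz, ih, he,
      show 2 * (e + 1) - 2 = 2 * e by omega, show 2 * (e + 1) - 1 = 2 * e + 1 by omega]
    ring

end Counting

end FreeGroup

open FreeGroup

def swapGen (a : Fin 2 × Bool) : Fin 2 × Bool := (a.1 + 1, a.2)

@[simp] theorem swapGen_swapGen (a : Fin 2 × Bool) : swapGen (swapGen a) = a := by
  revert a; decide

theorem swapGen_ne_invLetter (a : Fin 2 × Bool) : swapGen a ≠ invLetter a := by
  revert a; decide

/-- For the four letters `a`, these are `αβ, βα, β⁻¹α⁻¹, α⁻¹β⁻¹`: the cyclically reduced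
words conjugate to `(αβ)^{±1}`. -/
def period (a : Fin 2 × Bool) : List (Fin 2 × Bool) := [a, swapGen a]

theorem isCyclicallyReduced_period (a : Fin 2 × Bool) : IsCyclicallyReduced (period a) := by
  refine ⟨?_, ?_⟩ <;> revert a <;> decide

theorem isReduced_period (a : Fin 2 × Bool) : IsReduced (period a) :=
  (isCyclicallyReduced_period a).isReduced

theorem mk_period (a : Fin 2 × Bool) : mk (period a) = mk [a] * mk [swapGen a] := rfl

theorem isReduced_conj_period_of_not_cancel {x a : Fin 2 × Bool}
    (hx : ¬(x = invLetter a ∨ x = swapGen a)) : IsReduced ([x] ++ period a ++ invRev [x]) := by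
  revert x a; decide

def conjPowWord (u : List (Fin 2 × Bool)) (a : Fin 2 × Bool) (k : ℕ) : List (Fin 2 × Bool) :=
  u ++ (List.replicate k (period a)).flatten ++ invRev u

section ConjPowWord

variable {u : List (Fin 2 × Bool)} {a : Fin 2 × Bool} {k : ℕ}

theorem mk_conjPowWord : mk (conjPowWord u a k) = mk u * mk (period a) ^ k * (mk u)⁻¹ := by
  rw [conjPowWord, pow_mk, inv_mk, mul_mk, mul_mk]

theorem toWord_mk_conjPowWord (h : IsReduced (u ++ period a ++ invRev u)) (hk : k ≠ 0) :
    (mk (conjPowWord u a k)).toWord = conjPowWord u a k := by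
  rw [toWord_mk, conjPowWord,
    (IsReduced.append_flatten_replicate_append (isCyclicallyReduced_period a) h hk).reduce_eq]

theorem norm_mk_conjPowWord (h : IsReduced (u ++ period a ++ invRev u)) (hk : k ≠ 0) :
    (mk (conjPowWord u a k)).norm = 2 * u.length + 2 * k := by
  rw [FreeGroup.norm, toWord_mk_conjPowWord h hk]
  simp only [conjPowWord, period, List.length_append, List.length_flatten, List.map_replicate,
    List.length_cons, List.length_nil, List.sum_replicate, smul_eq_mul, invRev_length]
  ring

theorem conjPowWord_inj {u' : List (Fin 2 × Bool)} {a' : Fin 2 × Bool} {k' : ℕ}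
    (hk : k ≠ 0) (hk' : k' ≠ 0) (h : conjPowWord u a k = conjPowWord u' a' k') :
    u = u' ∧ a = a' ∧ k = k' := by
  obtain ⟨rfl, hc⟩ := eq_of_append_append_invRev_eq
    ((isCyclicallyReduced_period a).flatten_replicate k)
    ((isCyclicallyReduced_period a').flatten_replicate k') h
  have ha : a = a' := by
    simpa [period, List.head?_flatten_replicate hk, List.head?_flatten_replicate hk'] using
      congrArg List.head? hc
  subst ha
  exact ⟨rfl, rfl, by simpa [period] using congrArg List.length hc⟩

end ConjPowWord

def conjPowNormalForms : Set F2 :=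
  {g | ∃ u a k, k ≠ 0 ∧ IsReduced (u ++ period a ++ invRev u) ∧ g = mk (conjPowWord u a k)}

theorem conj_mk_period {a x : Fin 2 × Bool} (hx : x = invLetter a ∨ x = swapGen a) :
    mk [x] * mk (period a) * (mk [x])⁻¹ = mk (period (swapGen a)) := by
  rw [mk_period, mk_period, swapGen_swapGen]
  rcases hx with rfl | rfl
  · rw [mk_invLetter]
    generalize mk [a] = p
    group
  · group

theorem conj_letter_mem_conjPowNormalForms (x : Fin 2 × Bool) {g : F2}
    (hg : g ∈ conjPowNormalForms) :
    mk [x] * g * (mk [x])⁻¹ ∈ conjPowNormalForms := by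
  obtain ⟨u, a, k, hk, hred, rfl⟩ := hg
  rcases u with _ | ⟨y, u⟩
  · by_cases hx : x = invLetter a ∨ x = swapGen a
    · refine ⟨[], swapGen a, k, hk, by simpa using isReduced_period _, ?_⟩
      simp only [mk_conjPowWord, ← conj_mk_period hx, conj_pow, ← one_eq_mk, one_mul, inv_one,
        mul_one]
    · refine ⟨[x], a, k, hk, ?_, ?_⟩
      · exact isReduced_conj_period_of_not_cancel hx
      · simp only [mk_conjPowWord, ← one_eq_mk, one_mul, inv_one, mul_one]
  · by_cases hxy : x = invLetter y
    · refine ⟨u, a, k, hk, hred.infix ⟨[y], [invLetter y], by simp [invRev_cons_eq_append]⟩, ?_⟩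
      rw [mk_conjPowWord, mk_conjPowWord, hxy, mk_invLetter, mk_cons_eq_mul y u]
      group
    · refine ⟨x :: y :: u, a, k, hk, ?_, ?_⟩
      · have hyx : y ≠ invLetter x := fun h => hxy (eq_invLetter_comm.1 h)
        rw [isReduced_append_append_invRev_iff (by simp [period])] at hred ⊢
        simp only [List.cons_append, isReduced_cons_cons_iff_ne] at hred ⊢
        exact ⟨⟨hyx, hred.1⟩, ⟨hyx, hred.2⟩⟩
      · rw [mk_conjPowWord, mk_conjPowWord, mk_cons_eq_mul x (y :: u)]
        group

theorem conj_mem_conjPowNormalForms (w : F2) {g : F2} (hg : g ∈ conjPowNormalForms) :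
    w * g * w⁻¹ ∈ conjPowNormalForms := by
  rw [← mk_toWord (x := w)]
  induction w.toWord with
  | nil => simpa [← one_eq_mk] using hg
  | cons x L ih =>
    rw [mk_cons_eq_mul, show mk [x] * mk L * g * (mk [x] * mk L)⁻¹ =
      mk [x] * (mk L * g * (mk L)⁻¹) * (mk [x])⁻¹ by group]
    exact conj_letter_mem_conjPowNormalForms x ih

theorem alphabeta_zpow_mem_conjPowNormalForms {k : ℤ} (hk : k ≠ 0) :
    (α * β) ^ k ∈ conjPowNormalForms := by
  obtain ⟨n, rfl | rfl⟩ := Int.eq_nat_or_neg k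
  · refine ⟨[], (0, true), n, by simpa using hk, by decide, ?_⟩
    rw [mk_conjPowWord, zpow_natCast, ← one_eq_mk]
    simp only [one_mul, inv_one, mul_one]
    rfl
  · refine ⟨[], (1, false), n, by simpa using hk, by decide, ?_⟩
    rw [mk_conjPowWord, zpow_neg, zpow_natCast, ← inv_pow, ← one_eq_mk, mul_inv_rev]
    simp only [one_mul, inv_one, mul_one]
    rfl

theorem exists_mk_period_eq_conj (a : Fin 2 × Bool) :
    ∃ (w : F2) (ε : ℤ), mk (period a) = w * (α * β) ^ ε * w⁻¹ := by
  obtain ⟨i, _ | _⟩ := a <;> fin_cases i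
  · exact ⟨β, -1, by show α⁻¹ * β⁻¹ = _; group⟩
  · exact ⟨1, -1, by show β⁻¹ * α⁻¹ = _; group⟩
  · exact ⟨1, 1, by show α * β = _; group⟩
  · exact ⟨β, 1, by show β * α = _; group⟩

theorem mem_C_alphabeta_iff {n : ℕ} (hn : n ≠ 0) {g : F2} :
    g ∈ C (α * β) n ↔ g.norm = n ∧ g ∈ conjPowNormalForms := by
  refine ⟨fun ⟨hnorm, w, k, hg⟩ => ⟨hnorm, ?_⟩, fun ⟨hnorm, u, a, k, _, _, hg⟩ => ⟨hnorm, ?_⟩⟩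
  · have hk : k ≠ 0 := by
      rintro rfl
      apply hn
      rw [← hnorm, hg, zpow_zero, mul_one, mul_inv_cancel, FreeGroup.norm_one]
    exact hg ▸ conj_mem_conjPowNormalForms w (alphabeta_zpow_mem_conjPowNormalForms hk)
  · obtain ⟨w, ε, hw⟩ := exists_mk_period_eq_conj a
    refine ⟨mk u * w, ε * k, ?_⟩
    rw [hg, mk_conjPowWord, hw, conj_pow, ← zpow_natCast, ← zpow_mul]
    group

theorem isReduced_conj_period_iff {v : List (Fin 2 × Bool)} {a : Fin 2 × Bool} :
    IsReduced (invRev v ++ period a ++ invRev (invRev v)) ↔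
      IsReduced (swapGen a :: v) ∧ IsReduced (invLetter a :: v) := by
  rw [isReduced_append_append_invRev_iff (by simp [period]),
    isReduced_invRev_append_iff (L := period a), isReduced_invRev_append_iff (L := invRev _),
    invRev_invRev, and_comm]
  simp only [period, invRev_cons_eq_append, invRev_empty, List.nil_append,
    List.cons_append, isReduced_cons_cons_iff_ne, invLetter_invLetter, swapGen_ne_invLetter a,
    (swapGen_ne_invLetter a).symm, ne_eq, not_false_eq_true, true_and]

/-- Indexed by `v = invRev u` rather than `u`, so that the junction conditions on the last letter
of `u` become conditions on the first letter of `v` (`isReduced_conj_period_iff`), which is what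
`commonReducedTails` counts. On this index set the exponent `r + 1 - |v|` is positive. -/
def normalFormIndex (r : ℕ) : Finset ((_ : Fin 2 × Bool) × List (Fin 2 × Bool)) :=
  Finset.univ.sigma fun a => commonReducedTails r (swapGen a) (invLetter a)

def normalFormOfIndex (r : ℕ) (p : (_ : Fin 2 × Bool) × List (Fin 2 × Bool)) : F2 :=
  mk (conjPowWord (invRev p.2) p.1 (r + 1 - p.2.length))

theorem C_alphabeta_eq_image (r : ℕ) :
    C (α * β) (2 * r + 2) = (normalFormIndex r).image (normalFormOfIndex r) := by
  ext g
  simp only [mem_C_alphabeta_iff (by omega : 2 * r + 2 ≠ 0), Finset.coe_image, Set.mem_image,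
    Finset.mem_coe, normalFormIndex, Finset.mem_sigma, Finset.mem_univ, true_and,
    mem_commonReducedTails, Sigma.exists, normalFormOfIndex]
  constructor
  · rintro ⟨hnorm, u, a, k, hk, hred, rfl⟩
    rw [norm_mk_conjPowWord hred hk] at hnorm
    refine ⟨a, invRev u, ⟨by rw [invRev_length]; omega,
      isReduced_conj_period_iff.1 (by simpa only [invRev_invRev] using hred)⟩, ?_⟩
    rw [invRev_invRev, invRev_length, show r + 1 - u.length = k by omega]
  · rintro ⟨a, v, ⟨hlen, hred⟩, rfl⟩
    have hred' := isReduced_conj_period_iff.2 hred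
    refine ⟨?_, invRev v, a, r + 1 - v.length, by omega, hred', rfl⟩
    rw [norm_mk_conjPowWord hred' (by omega), invRev_length]
    omega

theorem injOn_normalFormOfIndex (r : ℕ) :
    Set.InjOn (normalFormOfIndex r) (normalFormIndex r) := by
  rintro ⟨a, v⟩ hv ⟨a', v'⟩ hv' h
  simp only [normalFormIndex, Finset.coe_sigma, Set.mem_sigma_iff, Finset.mem_univ, true_and,
    Finset.mem_coe, mem_commonReducedTails] at hv hv'
  have hw := congrArg toWord h
  simp only [normalFormOfIndex] at hw
  rw [toWord_mk_conjPowWord (isReduced_conj_period_iff.2 hv.2) (by omega),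
    toWord_mk_conjPowWord (isReduced_conj_period_iff.2 hv'.2) (by omega)] at hw
  obtain ⟨hvv, rfl, -⟩ := conjPowWord_inj (by omega) (by omega) hw
  rw [invRev_injective hvv]

/-- The number of elements of word length exactly `2r+2` that are conjugates of a
power of `αβ` is `4·3^r`. -/
theorem card_C_alphabeta_even (r : ℕ) :
    Nat.card (C (α * β) (2 * r + 2)) = 4 * 3 ^ r := by
  rw [C_alphabeta_eq_image, Nat.card_coe_set_eq, Set.ncard_coe_finset,
    Finset.card_image_of_injOn (injOn_normalFormOfIndex r), normalFormIndex, Finset.card_sigma]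
  simp [card_commonReducedTails (swapGen_ne_invLetter _)]
end
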